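/- Every u ∈ ℋ can be represented over the minimal Martin space: (i) u_i = sup_{w ∈ ℳᵐ} (μ_u(w) + w_i) for all i ∈ S; (ii) any ν : ℳᵐ → ℝ ∪ {−∞} with u_i = sup_{w ∈ ℳᵐ} (ν(w) + w_i) for all i satisfies sup_{w ∈ ℳᵐ} ν(w) < +∞ and ν(w) ≤ μ_u(w) for all w ∈ ℳᵐ (so μ_u is the maximal representing map); (iii) conversely, for any ν : ℳᵐ → ℝ ∪ {−∞} with sup_{w ∈ ℳᵐ} ν(w) < +∞, the vector defined by u_i = sup_{w ∈ ℳᵐ} (ν(w) + w_i) belongs to ℋ. -/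

import Mathlib

open Filter Topology

noncomputable section

namespace MaxPlus

variable {S : Type*}

/-- Weight of the path `p 0, p 1, ..., p n` for the kernel `A`. -/
def pathWeight (A : S → S → EReal) (p : ℕ → S) (n : ℕ) : EReal :=
  ∑ k ∈ Finset.range n, A (p k) (p (k + 1))

/-- The max-plus star kernel `A*`: supremum of weights of paths of length `≥ 0`. -/
def star (A : S → S → EReal) (i j : S) : EReal :=
  ⨆ (n : ℕ) (p : ℕ → S) (_ : p 0 = i ∧ p n = j), pathWeight A p n

/-- The max-plus kernel `A⁺`: supremum of weights of paths of length `≥ 1`. -/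
def plus (A : S → S → EReal) (i j : S) : EReal :=
  ⨆ (n : ℕ) (_ : 1 ≤ n) (p : ℕ → S) (_ : p 0 = i ∧ p n = j), pathWeight A p n

/-- `π` is a left super-harmonic row vector (with full support, being real valued). -/
def LeftSuperharmonic (A : S → S → EReal) (π : S → ℝ) : Prop :=
  ∀ j, (⨆ i, ((π i : EReal) + A i j)) ≤ (π j : EReal)

/-- The Martin kernel `K_{ij} = A*_{ij} - π_j`. -/
def K (A : S → S → EReal) (π : S → ℝ) (i j : S) : EReal :=
  star A i j - (π j : EReal)

/-- `K♭_{ij} = A⁺_{ij} - π_j`. -/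
def Kflat (A : S → S → EReal) (π : S → ℝ) (i j : S) : EReal :=
  plus A i j - (π j : EReal)

/-- The set `𝒦` of columns of the Martin kernel. -/
def kerCols (A : S → S → EReal) (π : S → ℝ) : Set (S → EReal) :=
  Set.range fun j => fun i => K A π i j

/-- The Martin space `ℳ`: closure of `𝒦` in the product topology. -/
def martin (A : S → S → EReal) (π : S → ℝ) : Set (S → EReal) :=
  closure (kerCols A π)

/-- `μ_u(w)`: the limsup of `π_j + u_j` as `K_{·j} → w`. -/
def mu (A : S → S → EReal) (π : S → ℝ) (u : S → EReal) (w : S → EReal) : EReal :=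
  ⨅ (W : Set (S → EReal)) (_ : W ∈ 𝓝 w),
    ⨆ (j : S) (_ : (fun i => K A π i j) ∈ W), ((π j : EReal) + u j)

/-- `w♭_i`: the liminf of `K♭_{ij}` as `K_{·j} → w`. -/
def flat (A : S → S → EReal) (π : S → ℝ) (w : S → EReal) (i : S) : EReal :=
  ⨆ (W : Set (S → EReal)) (_ : W ∈ 𝓝 w),
    ⨅ (j : S) (_ : (fun i' => K A π i' j) ∈ W), Kflat A π i j

/-- The kernel `H(z,w) = μ_w(z)`. -/
def H (A : S → S → EReal) (π : S → ℝ) (z w : S → EReal) : EReal := mu A π w z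

/-- The kernel `H♭(z,w) = μ_{w♭}(z)`. -/
def Hflat (A : S → S → EReal) (π : S → ℝ) (z w : S → EReal) : EReal :=
  mu A π (flat A π w) z

/-- The minimal Martin space `ℳᵐ = {w ∈ ℳ : H♭(w,w) = 0}`. -/
def martinMin (A : S → S → EReal) (π : S → ℝ) : Set (S → EReal) :=
  {w | w ∈ martin A π ∧ Hflat A π w w = 0}

/-- The maximal circuit mean `ρ(A)`. -/
def maxCircuitMean (A : S → S → EReal) : EReal :=
  ⨆ (k : ℕ) (_ : 1 ≤ k) (p : ℕ → S) (_ : p k = p 0),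
    (((k : ℝ)⁻¹ : ℝ) : EReal) * pathWeight A p k

/-- `α`-almost-geodesic with respect to the left super-harmonic vector `π`. -/
def IsAlmostGeodesic (A : S → S → EReal) (π : S → ℝ) (x : ℕ → S) : Prop :=
  ∃ α : ℝ, 0 ≤ α ∧ ∀ k : ℕ,
    (π (x k) : EReal) ≤ (α : EReal) + (π (x 0) : EReal) + pathWeight A x k

/-- The set `𝒮` of `π`-integrable super-harmonic vectors. -/
def Sset (A : S → S → EReal) (π : S → ℝ) : Set (S → EReal) :=
  {u | (∀ i, u i ≠ ⊤) ∧ (∀ i, (⨆ j, A i j + u j) ≤ u i) ∧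
    (⨆ j, ((π j : EReal) + u j)) < ⊤}

/-- The set `ℋ` of `π`-integrable harmonic vectors. -/
def Hset (A : S → S → EReal) (π : S → ℝ) : Set (S → EReal) :=
  {u | (∀ i, u i ≠ ⊤) ∧ (∀ i, (⨆ j, A i j + u j) = u i) ∧
    (⨆ j, ((π j : EReal) + u j)) < ⊤}

/-- A vector is normalised if `sup_j (π_j + u_j) = 0`. -/
def Normalised (π : S → ℝ) (u : S → EReal) : Prop :=
  (⨆ j, ((π j : EReal) + u j)) = 0

/-- `ξ` is an extremal generator of `V`. -/
def ExtremalGen (V : Set (S → EReal)) (ξ : S → EReal) : Prop :=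
  ξ ∈ V ∧ ξ ≠ (fun _ => (⊥ : EReal)) ∧
    ∀ u v, u ∈ V → v ∈ V → ξ = (fun i => u i ⊔ v i) → ξ = u ∨ ξ = v

end MaxPlus

/-!
The limsup `μ_u(w)` and the liminf `w♭_i` are taken along one filter, that of the indices `j`
with `K_{·j} → w`. Along it `K_{ij} → w_i`, so the inequality `K_{ij} + π_j + u_j ≤ u_i`, valid
for every super-harmonic `u`, passes to the limit as `μ_u(w) + w_i ≤ u_i`; this is `≥` in the
representation. For `w ∈ ℳᵐ`, where `μ_{w♭}(w) = 0`, the same inequality for the super-harmonic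
`w♭` gives `w ≤ w♭`, and its analogue `μ_w(w) + w♭_i ≤ (Aw)_i` makes `w` harmonic; hence every
`sup_w (ν(w) + w)` is harmonic.

For `≤`, follow from `i` steps that are optimal for the harmonic `u` up to errors `δ 2^{-k-1}`.
Since `π + u` is bounded above, the resulting path is an almost-geodesic. Along an
almost-geodesic the columns `K_{·x_k}`, shifted by the increasing bounded reals
`π_{x_k} - weight(x_0 … x_k)`, increase, so they converge to some `w`; comparing `x_k` with
`x_{k+1}` shows that `π_{x_k} + w♭_{x_k}` is eventually almost nonnegative, so `w ∈ ℳᵐ`. The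
same shifts bound `μ_u(w) + w_i` from below by `u_i - δ`.
-/

namespace MaxPlus

theorem _root_.EReal.add_iSup {ι : Sort*} (c : EReal) (f : ι → EReal) :
    c + ⨆ i, f i = ⨆ i, c + f i := by
  refine le_antisymm ?_ (iSup_le fun i => add_le_add_right (le_iSup f i) c)
  refine EReal.add_le_of_forall_lt fun a ha b hb => ?_
  obtain ⟨i, hi⟩ := lt_iSup_iff.1 hb
  exact (add_le_add ha.le hi.le).trans (le_iSup (fun i => c + f i) i)

theorem _root_.EReal.iSup_add {ι : Sort*} (c : EReal) (f : ι → EReal) :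
    (⨆ i, f i) + c = ⨆ i, f i + c := by
  simp only [add_comm _ c, EReal.add_iSup]

theorem _root_.EReal.sub_add_add_cancel (a b : EReal) (c : ℝ) : (a - c) + (c + b) = a + b := by
  rw [sub_eq_add_neg, add_assoc, ← add_assoc (-(c : EReal)), ← EReal.coe_neg, ← EReal.coe_add,
    neg_add_cancel, EReal.coe_zero, zero_add]

theorem _root_.EReal.continuous_const_add {c : EReal} (hc : c ≠ ⊤) :
    Continuous fun x : EReal => c + x := by
  refine continuous_iff_continuousAt.2 fun x => ?_
  induction c with
  | bot => simpa only [EReal.bot_add] using continuousAt_const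
  | coe r => exact (EReal.continuousAt_add (Or.inl (EReal.coe_ne_top r))
      (Or.inl (EReal.coe_ne_bot r))).comp (continuousAt_const.prodMk continuousAt_id)
  | top => exact absurd rfl hc

theorem _root_.EReal.tendsto_of_tendsto_add {ι : Type*} {l : Filter ι} {f : ι → EReal}
    {r : ι → ℝ} {a : EReal} {R : ℝ} (hf : Tendsto (fun k => f k + r k) l (𝓝 a))
    (hr : Tendsto r l (𝓝 R)) : Tendsto f l (𝓝 (a + ((-R : ℝ) : EReal))) := by
  have hadd := (EReal.continuousAt_add (p := (a, ((-R : ℝ) : EReal)))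
    (Or.inr (EReal.coe_ne_bot _)) (Or.inr (EReal.coe_ne_top _))).tendsto.comp
    (hf.prodMk_nhds (EReal.tendsto_coe.2 hr.neg))
  refine hadd.congr fun k => ?_
  simp only [Function.comp_apply, add_assoc, ← EReal.coe_add, add_neg_cancel, EReal.coe_zero,
    add_zero]

section

variable {S : Type*} {A : S → S → EReal} {π : S → ℝ}

def Superharmonic (A : S → S → EReal) (u : S → EReal) : Prop :=
  ∀ i j, A i j + u j ≤ u i

theorem Superharmonic.add_const {u : S → EReal} (hu : Superharmonic A u) (c : EReal) :
    Superharmonic A fun i => u i + c := fun i j => by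
  rw [← add_assoc]
  exact add_le_add_left (hu i j) c

theorem superharmonic_of_mem_Hset {u : S → EReal} (hu : u ∈ Hset A π) : Superharmonic A u :=
  fun i j => (le_iSup (fun k => A i k + u k) j).trans (hu.2.1 i).le

theorem LeftSuperharmonic.add_le (hπ : LeftSuperharmonic A π) (i j : S) :
    (π i : EReal) + A i j ≤ π j :=
  (le_iSup (fun k => (π k : EReal) + A k j) i).trans (hπ j)

theorem LeftSuperharmonic.superharmonic_neg (hπ : LeftSuperharmonic A π) :
    Superharmonic A fun i => ((-π i : ℝ) : EReal) := fun i j => by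
  have h := hπ.add_le i j
  dsimp only
  generalize A i j = a at h ⊢
  induction a with
  | bot => simp
  | coe a => norm_cast at h ⊢; linarith
  | top => simp at h

theorem LeftSuperharmonic.ne_top (hπ : LeftSuperharmonic A π) (i j : S) : A i j ≠ ⊤ := by
  intro h
  have := hπ.superharmonic_neg i j
  rw [h, EReal.top_add_coe] at this
  exact EReal.coe_ne_top _ (top_le_iff.1 this)

theorem pathWeight_succ (A : S → S → EReal) (p : ℕ → S) (n : ℕ) :
    pathWeight A p (n + 1) = pathWeight A p n + A (p n) (p (n + 1)) :=
  Finset.sum_range_succ _ _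

theorem pathWeight_succ' (A : S → S → EReal) (p : ℕ → S) (n : ℕ) :
    pathWeight A p (n + 1) = A (p 0) (p 1) + pathWeight A (fun t => p (t + 1)) n := by
  rw [pathWeight, Finset.sum_range_succ', add_comm]
  rfl

theorem pathWeight_le_star {p : ℕ → S} {n : ℕ} {i j : S} (h0 : p 0 = i) (hn : p n = j) :
    pathWeight A p n ≤ star A i j :=
  le_iSup_of_le n <| le_iSup_of_le p <| le_iSup_of_le ⟨h0, hn⟩ le_rfl

theorem pathWeight_le_plus {p : ℕ → S} {n : ℕ} {i j : S} (hn1 : 1 ≤ n) (h0 : p 0 = i)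
    (hn : p n = j) : pathWeight A p n ≤ plus A i j :=
  le_iSup_of_le n <| le_iSup_of_le hn1 <| le_iSup_of_le p <| le_iSup_of_le ⟨h0, hn⟩ le_rfl

theorem pathWeight_add_le_of_superharmonic {u : S → EReal} (hu : Superharmonic A u)
    (p : ℕ → S) (n : ℕ) : pathWeight A p n + u (p n) ≤ u (p 0) := by
  induction n with
  | zero => simp [pathWeight]
  | succ n ih =>
    rw [pathWeight_succ, add_assoc]
    exact (add_le_add_right (hu _ _) _).trans ih

theorem zero_le_star (i : S) : 0 ≤ star A i i :=
  pathWeight_le_star (p := fun _ => i) (n := 0) rfl rfl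

theorem plus_le_star (i j : S) : plus A i j ≤ star A i j :=
  iSup₂_le fun _ _ => iSup₂_le fun _ hp => pathWeight_le_star hp.1 hp.2

theorem add_star_le_plus (i k j : S) : A i k + star A k j ≤ plus A i j := by
  simp only [star, EReal.add_iSup]
  refine iSup_le fun n => iSup_le fun p => iSup_le fun hp => ?_
  let q : ℕ → S := fun t => Nat.casesOn t i p
  calc A i k + pathWeight A p n = pathWeight A q (n + 1) := by
        rw [pathWeight_succ', ← hp.1]; rfl
    _ ≤ plus A i j := pathWeight_le_plus (by omega) rfl hp.2

theorem plus_eq_iSup (i j : S) : plus A i j = ⨆ k, A i k + star A k j := by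
  refine le_antisymm (iSup₂_le fun n hn => iSup₂_le fun p hp => ?_)
    (iSup_le fun k => add_star_le_plus i k j)
  obtain ⟨m, rfl⟩ : ∃ m, n = m + 1 := ⟨n - 1, by omega⟩
  rw [pathWeight_succ', hp.1]
  exact le_iSup_of_le (p 1)
    (add_le_add_right (pathWeight_le_star (p := fun t => p (t + 1)) rfl hp.2) _)

theorem star_add_le_of_superharmonic {u : S → EReal} (hu : Superharmonic A u) (i j : S) :
    star A i j + u j ≤ u i := by
  simp only [star, EReal.iSup_add]
  exact iSup_le fun n => iSup_le fun p => iSup_le fun hp =>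
    hp.1 ▸ hp.2 ▸ pathWeight_add_le_of_superharmonic hu p n

theorem superharmonic_star_apply (j : S) : Superharmonic A fun i => star A i j :=
  fun i k => (add_star_le_plus i k j).trans (plus_le_star i j)

theorem superharmonic_plus_apply (j : S) : Superharmonic A fun i => plus A i j :=
  fun i k => (add_le_add_right (plus_le_star k j) _).trans (add_star_le_plus i k j)

theorem star_add_star_le (i k j : S) : star A i k + star A k j ≤ star A i j :=
  star_add_le_of_superharmonic (superharmonic_star_apply j) i k

theorem le_star (i j : S) : A i j ≤ star A i j :=
  calc A i j = A i j + 0 := (add_zero _).symm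
    _ ≤ A i j + star A j j := add_le_add_right (zero_le_star j) _
    _ ≤ star A i j := superharmonic_star_apply j i j

theorem K_add_le_of_superharmonic {u : S → EReal} (hu : Superharmonic A u) (i j : S) :
    K A π i j + ((π j : EReal) + u j) ≤ u i := by
  rw [K, EReal.sub_add_add_cancel]
  exact star_add_le_of_superharmonic hu i j

theorem K_add_coe_add (i j : S) (r : ℝ) :
    K A π i j + ((π j + r : ℝ) : EReal) = star A i j + r := by
  rw [EReal.coe_add, K, EReal.sub_add_add_cancel]

theorem K_le_neg (hπ : LeftSuperharmonic A π) (i j : S) : K A π i j ≤ ((-π i : ℝ) : EReal) := by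
  have h := K_add_le_of_superharmonic (π := π) hπ.superharmonic_neg i j
  rwa [← EReal.coe_add, add_neg_cancel, EReal.coe_zero, add_zero] at h

theorem neg_le_K (i : S) : ((-π i : ℝ) : EReal) ≤ K A π i i := by
  rw [K, EReal.coe_neg, ← zero_sub]
  exact EReal.sub_le_sub (zero_le_star i) le_rfl

theorem superharmonic_K_apply (j : S) : Superharmonic A fun i => K A π i j := by
  simpa only [K, sub_eq_add_neg] using (superharmonic_star_apply j).add_const _

theorem Kflat_le_K (i j : S) : Kflat A π i j ≤ K A π i j :=
  EReal.sub_le_sub (plus_le_star i j) le_rfl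

theorem Kflat_eq_iSup (i j : S) : Kflat A π i j = ⨆ k, A i k + K A π k j := by
  simp only [Kflat, K, plus_eq_iSup, sub_eq_add_neg, EReal.iSup_add, add_assoc]

theorem superharmonic_Kflat_apply (j : S) : Superharmonic A fun i => Kflat A π i j := by
  simpa only [Kflat, sub_eq_add_neg] using (superharmonic_plus_apply j).add_const _

theorem Kflat_add_le_iSup {u : S → EReal} (hu : Superharmonic A u) (i j : S) :
    Kflat A π i j + ((π j : EReal) + u j) ≤ ⨆ k, A i k + u k := by
  rw [Kflat_eq_iSup, EReal.iSup_add]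
  refine iSup_mono fun k => ?_
  rw [add_assoc]
  exact add_le_add_right (K_add_le_of_superharmonic hu k j) _

variable (A π) in
def martinFilter (w : S → EReal) : Filter S :=
  comap (fun j i => K A π i j) (𝓝 w)

theorem mu_eq_limsup (u w : S → EReal) :
    mu A π u w = limsup (fun j => (π j : EReal) + u j) (martinFilter A π w) :=
  ((𝓝 w).basis_sets.comap _).limsup_eq_iInf_iSup.symm

theorem flat_eq_liminf (w : S → EReal) (i : S) :
    flat A π w i = liminf (fun j => Kflat A π i j) (martinFilter A π w) :=
  ((𝓝 w).basis_sets.comap _).liminf_eq_iSup_iInf.symm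

theorem neBot_martinFilter {w : S → EReal} (hw : w ∈ martin A π) :
    (martinFilter A π w).NeBot :=
  comap_neBot fun t ht => by
    obtain ⟨_, hv, j, rfl⟩ := mem_closure_iff_nhds.1 hw t ht
    exact ⟨j, hv⟩

theorem tendsto_K_martinFilter (w : S → EReal) (i : S) :
    Tendsto (fun j => K A π i j) (martinFilter A π w) (𝓝 (w i)) :=
  ((continuous_apply i).tendsto w).comp tendsto_comap

theorem tendsto_add_K_martinFilter (hπ : LeftSuperharmonic A π) (w : S → EReal) (i k : S) :
    Tendsto (fun j => A i k + K A π k j) (martinFilter A π w) (𝓝 (A i k + w k)) :=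
  ((EReal.continuous_const_add (hπ.ne_top i k)).tendsto _).comp (tendsto_K_martinFilter w k)

theorem liminf_K_eq {w : S → EReal} (hw : w ∈ martin A π) (i : S) :
    liminf (fun j => K A π i j) (martinFilter A π w) = w i :=
  have := neBot_martinFilter hw
  (tendsto_K_martinFilter w i).liminf_eq

theorem le_neg_of_mem_martin (hπ : LeftSuperharmonic A π) {w : S → EReal}
    (hw : w ∈ martin A π) (i : S) : w i ≤ ((-π i : ℝ) : EReal) :=
  have := neBot_martinFilter hw
  le_of_tendsto' (tendsto_K_martinFilter w i) (K_le_neg hπ i)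

theorem add_nonpos_of_mem_martin (hπ : LeftSuperharmonic A π) {w : S → EReal}
    (hw : w ∈ martin A π) (i : S) : (π i : EReal) + w i ≤ 0 :=
  calc (π i : EReal) + w i ≤ π i + ((-π i : ℝ) : EReal) :=
        add_le_add_right (le_neg_of_mem_martin hπ hw i) _
    _ = 0 := by rw [← EReal.coe_add, add_neg_cancel, EReal.coe_zero]

theorem superharmonic_of_mem_martin (hπ : LeftSuperharmonic A π) {w : S → EReal}
    (hw : w ∈ martin A π) : Superharmonic A w := fun i k =>
  have := neBot_martinFilter hw
  le_of_tendsto_of_tendsto' (tendsto_add_K_martinFilter hπ w i k) (tendsto_K_martinFilter w i)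
    fun j => superharmonic_K_apply j i k

theorem mu_mono {u v : S → EReal} (huv : u ≤ v) (w : S → EReal) : mu A π u w ≤ mu A π v w := by
  simp only [mu_eq_limsup]
  exact limsup_le_limsup (.of_forall fun j => add_le_add_right (huv j) _)

theorem mu_le_iSup (u w : S → EReal) : mu A π u w ≤ ⨆ j, (π j : EReal) + u j :=
  (mu_eq_limsup u w).trans_le limsup_le_iSup

theorem mu_add_flat_le_of_forall {u : S → EReal} (w : S → EReal) {i : S} {c : EReal}
    (h : ∀ j, Kflat A π i j + ((π j : EReal) + u j) ≤ c) : mu A π u w + flat A π w i ≤ c := by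
  rw [mu_eq_limsup, flat_eq_liminf]
  refine EReal.le_limsup_add.trans (limsup_le_of_le (h := .of_forall fun j => ?_))
  simpa only [Pi.add_apply, add_comm] using h j

theorem mu_add_le_of_superharmonic {u w : S → EReal} (hw : w ∈ martin A π)
    (hu : Superharmonic A u) (i : S) : mu A π u w + w i ≤ u i := by
  rw [mu_eq_limsup, ← liminf_K_eq hw i]
  refine EReal.le_limsup_add.trans (limsup_le_of_le (h := .of_forall fun j => ?_))
  simpa only [Pi.add_apply, add_comm] using K_add_le_of_superharmonic hu i j

theorem flat_le {w : S → EReal} (hw : w ∈ martin A π) (i : S) : flat A π w i ≤ w i := by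
  rw [flat_eq_liminf, ← liminf_K_eq hw i]
  exact liminf_le_liminf (.of_forall fun j => Kflat_le_K i j)

theorem add_le_flat (hπ : LeftSuperharmonic A π) {w : S → EReal} (hw : w ∈ martin A π)
    (i k : S) : A i k + w k ≤ flat A π w i := by
  have := neBot_martinFilter hw
  rw [flat_eq_liminf, ← (tendsto_add_K_martinFilter hπ w i k).liminf_eq]
  exact liminf_le_liminf (.of_forall fun j => by
    rw [Kflat_eq_iSup]
    exact le_iSup (fun m => A i m + K A π m j) k)

theorem superharmonic_flat {w : S → EReal} (hw : w ∈ martin A π) :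
    Superharmonic A (flat A π w) := fun i k => by
  have := neBot_martinFilter hw
  calc A i k + flat A π w k
      = liminf (fun _ => A i k) (martinFilter A π w) +
          liminf (fun j => Kflat A π k j) (martinFilter A π w) := by
        rw [liminf_const, flat_eq_liminf]
    _ ≤ liminf (fun j => A i k + Kflat A π k j) (martinFilter A π w) := EReal.le_liminf_add
    _ ≤ flat A π w i := by
        rw [flat_eq_liminf]
        exact liminf_le_liminf (.of_forall fun j => superharmonic_Kflat_apply j i k)

theorem Hflat_self_nonpos (hπ : LeftSuperharmonic A π) {w : S → EReal} (hw : w ∈ martin A π) :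
    Hflat A π w w ≤ 0 :=
  (mu_le_iSup _ w).trans <| iSup_le fun j =>
    (add_le_add_right (flat_le hw j) _).trans (add_nonpos_of_mem_martin hπ hw j)

theorem zero_le_mu_self {w : S → EReal} (hw : w ∈ martinMin A π) : 0 ≤ mu A π w w :=
  hw.2.symm.le.trans (mu_mono (flat_le hw.1) w)

theorem flat_eq_of_mem_martinMin {w : S → EReal} (hw : w ∈ martinMin A π) :
    flat A π w = w := by
  refine funext fun i => le_antisymm (flat_le hw.1 i) ?_
  have h := mu_add_le_of_superharmonic hw.1 (superharmonic_flat hw.1) i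
  rwa [← Hflat, hw.2, zero_add] at h

theorem harmonic_of_mem_martinMin (hπ : LeftSuperharmonic A π) {w : S → EReal}
    (hw : w ∈ martinMin A π) (i : S) : (⨆ k, A i k + w k) = w i := by
  have hsuper := superharmonic_of_mem_martin hπ hw.1
  refine le_antisymm (iSup_le (hsuper i)) ?_
  have h := mu_add_flat_le_of_forall (π := π) w (Kflat_add_le_iSup hsuper i)
  rw [flat_eq_of_mem_martinMin hw] at h
  exact (le_add_of_nonneg_left (zero_le_mu_self hw)).trans h

theorem le_mu_of_tendsto {ι : Type*} {l : Filter ι} [l.NeBot] {x : ι → S} {u w : S → EReal}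
    {f : ι → EReal} {a : EReal} (hx : Tendsto (fun k i => K A π i (x k)) l (𝓝 w))
    (hf : Tendsto f l (𝓝 a)) (hle : ∀ k, f k ≤ (π (x k) : EReal) + u (x k)) :
    a ≤ mu A π u w := by
  rw [mu_eq_limsup, ← hf.limsup_eq]
  exact (limsup_le_limsup (.of_forall hle)).trans
    ((tendsto_comap_iff.2 hx).limsup_comp_le_limsup (u := fun j => (π j : EReal) + u j))

theorem le_mu_of_forall_add_le {u w : S → EReal} (hw : w ∈ martinMin A π) {c : EReal}
    (h : ∀ j, c + w j ≤ u j) : c ≤ mu A π u w := by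
  have := neBot_martinFilter hw.1
  calc c ≤ mu A π w w + c := le_add_of_nonneg_left (zero_le_mu_self hw)
    _ = limsup (fun j => (π j : EReal) + w j) (martinFilter A π w) +
        liminf (fun _ => c) (martinFilter A π w) := by rw [mu_eq_limsup, liminf_const]
    _ ≤ mu A π u w := by
        rw [mu_eq_limsup]
        refine EReal.le_limsup_add.trans (limsup_le_limsup (.of_forall fun j => ?_))
        rw [Pi.add_apply, add_assoc, add_comm (w j)]
        exact add_le_add_right (h j) _

theorem iSup_add_mem_Hset (hπ : LeftSuperharmonic A π) {ν : (S → EReal) → EReal}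
    (hν : (⨆ w ∈ martinMin A π, ν w) < ⊤) :
    (fun i => ⨆ w ∈ martinMin A π, (ν w + w i)) ∈ Hset A π := by
  have hint : ∀ j, (π j : EReal) + ⨆ w ∈ martinMin A π, (ν w + w j) ≤
      ⨆ w ∈ martinMin A π, ν w := fun j => by
    simp only [EReal.add_iSup]
    refine iSup₂_mono fun w hw => ?_
    rw [add_left_comm]
    exact add_le_of_nonpos_right (add_nonpos_of_mem_martin hπ hw.1 j)
  refine ⟨fun i h => ?_, fun i => ?_, (iSup_le hint).trans_lt hν⟩
  · have := (hint i).trans_lt hν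
    rw [show (⨆ w ∈ martinMin A π, (ν w + w i)) = ⊤ from h, EReal.coe_add_top] at this
    exact lt_irrefl _ this
  · simp only [EReal.add_iSup]
    rw [iSup_comm]
    refine iSup_congr fun w => ?_
    rw [iSup_comm]
    refine iSup_congr fun hw => ?_
    simp only [add_left_comm (A i _), ← EReal.add_iSup, harmonic_of_mem_martinMin hπ hw]

def IsWeightMinorant (A : S → S → EReal) (x : ℕ → S) (c : ℕ → ℝ) : Prop :=
  ∀ k, ((c (k + 1) - c k : ℝ) : EReal) ≤ A (x k) (x (k + 1))

namespace IsWeightMinorant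

variable {x : ℕ → S} {c : ℕ → ℝ}

theorem monotone_sub (hc : IsWeightMinorant A x c) (hπ : LeftSuperharmonic A π) :
    Monotone fun k => π (x k) - c k := by
  refine monotone_nat_of_le_succ fun k => ?_
  have h := (add_le_add_right (hc k) _).trans (hπ.add_le (x k) (x (k + 1)))
  norm_cast at h
  linarith

theorem coe_sub_le_star (hc : IsWeightMinorant A x c) {k l : ℕ} (hkl : k ≤ l) :
    ((c l - c k : ℝ) : EReal) ≤ star A (x k) (x l) := by
  induction l, hkl using Nat.le_induction with
  | base => simpa using zero_le_star (x k)
  | succ l _ ih =>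
    calc ((c (l + 1) - c k : ℝ) : EReal)
        = ((c l - c k : ℝ) : EReal) + ((c (l + 1) - c l : ℝ) : EReal) := by
          rw [← EReal.coe_add]; ring_nf
      _ ≤ star A (x k) (x l) + star A (x l) (x (l + 1)) :=
          add_le_add ih ((hc l).trans (le_star _ _))
      _ ≤ star A (x k) (x (l + 1)) := star_add_star_le _ _ _

theorem monotone_K_add_sub (hc : IsWeightMinorant A x c) (i : S) :
    Monotone fun k => K A π i (x k) + ((π (x k) - c k : ℝ) : EReal) := by
  intro k l hkl
  simp only [sub_eq_add_neg, K_add_coe_add]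
  calc star A i (x k) + ((-c k : ℝ) : EReal)
      = (star A i (x k) + ((c l - c k : ℝ) : EReal)) + ((-c l : ℝ) : EReal) := by
        rw [add_assoc, ← EReal.coe_add]; ring_nf
    _ ≤ (star A i (x k) + star A (x k) (x l)) + ((-c l : ℝ) : EReal) :=
        add_le_add_left (add_le_add_right (hc.coe_sub_le_star hkl) _) _
    _ ≤ star A i (x l) + ((-c l : ℝ) : EReal) := add_le_add_left (star_add_star_le _ _ _) _

/-- When `c k` is the weight of `x` up to time `k`, `hbdd` says that `x` is an almost-geodesic. -/
theorem exists_mem_martinMin (hc : IsWeightMinorant A x c) (hπ : LeftSuperharmonic A π)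
    (hbdd : BddAbove (Set.range fun k => π (x k) - c k)) :
    ∃ w ∈ martinMin A π, Tendsto (fun k i => K A π i (x k)) atTop (𝓝 w) ∧
      ∀ i k, K A π i (x k) + ((π (x k) - c k - ⨆ n, (π (x n) - c n) : ℝ) : EReal) ≤ w i := by
  set r : ℕ → ℝ := fun k => π (x k) - c k
  set R := ⨆ n, r n
  have hr : Tendsto r atTop (𝓝 R) := tendsto_atTop_ciSup (hc.monotone_sub hπ) hbdd
  let w : S → EReal := fun i => (⨆ k, K A π i (x k) + r k) + ((-R : ℝ) : EReal)
  have hlim : Tendsto (fun k i => K A π i (x k)) atTop (𝓝 w) := tendsto_pi_nhds.2 fun i =>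
    EReal.tendsto_of_tendsto_add (tendsto_atTop_iSup (hc.monotone_K_add_sub i)) hr
  have hlow : ∀ i k, K A π i (x k) + ((r k - R : ℝ) : EReal) ≤ w i := fun i k => by
    rw [sub_eq_add_neg, EReal.coe_add, ← add_assoc]
    exact add_le_add_left (le_iSup (fun k => K A π i (x k) + r k) k) _
  have hmem : w ∈ martin A π := mem_closure_of_tendsto hlim (.of_forall fun k => ⟨x k, rfl⟩)
  have hflat : ∀ k, ((r k - R : ℝ) : EReal) ≤ π (x k) + flat A π w (x k) := fun k =>
    calc ((r k - R : ℝ) : EReal)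
        = π (x k) + (((c (k + 1) - c k : ℝ) : EReal) + (((-π (x (k + 1)) : ℝ) : EReal) +
            ((r (k + 1) - R : ℝ) : EReal))) := by
          simp only [r, ← EReal.coe_add]; ring_nf
      _ ≤ π (x k) + (A (x k) (x (k + 1)) + (K A π (x (k + 1)) (x (k + 1)) +
            ((r (k + 1) - R : ℝ) : EReal))) := by gcongr; exacts [hc k, neg_le_K _]
      _ ≤ π (x k) + (A (x k) (x (k + 1)) + w (x (k + 1))) := by gcongr; exact hlow _ _
      _ ≤ π (x k) + flat A π w (x k) := by gcongr; exact add_le_flat hπ hmem _ _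
  have hzero : Tendsto (fun k => ((r k - R : ℝ) : EReal)) atTop (𝓝 0) := by
    simpa using EReal.tendsto_coe.2 (hr.sub_const R)
  exact ⟨w, ⟨hmem, le_antisymm (Hflat_self_nonpos hπ hmem) (le_mu_of_tendsto hlim hzero hflat)⟩,
    hlim, hlow⟩

end IsWeightMinorant

theorem exists_path_of_le_iSup {u : S → EReal} (hu : ∀ s, u s ≠ ⊤)
    (hsub : ∀ s, u s ≤ ⨆ t, A s t + u t) {i : S} (hi : u i ≠ ⊥) {ε : ℕ → ℝ}
    (hε : ∀ k, 0 < ε k) :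
    ∃ x : ℕ → S, ∃ v : ℕ → ℝ, x 0 = i ∧ (∀ k, u (x k) = v k) ∧
      ∀ k, ((v k - ε k : ℝ) : EReal) ≤ A (x k) (x (k + 1)) + v (k + 1) := by
  let T := {p : S × ℝ // u p.1 = p.2}
  have hnext : ∀ (p : T) (k : ℕ), ∃ q : T,
      ((p.1.2 - ε k : ℝ) : EReal) ≤ A p.1.1 q.1.1 + q.1.2 := by
    rintro ⟨⟨s, a⟩, hs⟩ k
    have hlt : ((a - ε k : ℝ) : EReal) < ⨆ t, A s t + u t :=
      (EReal.coe_lt_coe_iff.2 (by linarith [hε k])).trans_le (hs ▸ hsub s)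
    obtain ⟨t, ht⟩ := lt_iSup_iff.1 hlt
    have hbot : u t ≠ ⊥ := fun h => by simp [h] at ht
    refine ⟨⟨(t, (u t).toReal), (EReal.coe_toReal (hu t) hbot).symm⟩, ?_⟩
    show ((a - ε k : ℝ) : EReal) ≤ A s t + ((u t).toReal : EReal)
    rw [EReal.coe_toReal (hu t) hbot]
    exact ht.le
  choose next hnext using hnext
  let y : ℕ → T := fun k =>
    Nat.rec ⟨(i, (u i).toReal), (EReal.coe_toReal (hu i) hi).symm⟩ (fun k p => next p k) k
  exact ⟨fun k => (y k).1.1, fun k => (y k).1.2, rfl, fun k => (y k).2, fun k => hnext (y k) k⟩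

theorem exists_isWeightMinorant_of_lt {u : S → EReal} (hu : ∀ s, u s ≠ ⊤)
    (hsub : ∀ s, u s ≤ ⨆ t, A s t + u t) {i : S} {z : ℝ} (hz : z < u i) :
    ∃ x : ℕ → S, ∃ c : ℕ → ℝ, x 0 = i ∧ IsWeightMinorant A x c ∧
      (∀ k, ((-c k : ℝ) : EReal) ≤ u (x k)) ∧ z ≤ -c 0 := by
  have hi : u i ≠ ⊥ := ne_bot_of_gt hz
  set δ := (u i).toReal - z
  have hδ : 0 < δ := by
    rw [← EReal.coe_toReal (hu i) hi, EReal.coe_lt_coe_iff] at hz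
    linarith
  obtain ⟨x, v, hx0, hxv, hv⟩ := exists_path_of_le_iSup hu hsub hi
    (ε := fun k => δ / 2 ^ (k + 1)) fun k => by positivity
  have hv0 : (u i).toReal = v 0 := by rw [← hx0, hxv, EReal.toReal_coe]
  refine ⟨x, fun k => δ / 2 ^ k - v k, hx0, fun k => ?_, fun k => ?_, ?_⟩
  · have h := EReal.sub_le_of_le_add (hv k)
    rw [← EReal.coe_sub] at h
    convert h using 2
    rw [pow_succ]
    ring
  · rw [hxv, EReal.coe_le_coe_iff]
    have : 0 ≤ δ / 2 ^ k := by positivity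
    linarith
  · simp only [δ, hv0, pow_zero, div_one]
    linarith

theorem le_iSup_mu_add (hπ : LeftSuperharmonic A π) {u : S → EReal} (hu : u ∈ Hset A π)
    (i : S) : u i ≤ ⨆ w ∈ martinMin A π, (mu A π u w + w i) := by
  refine EReal.ge_of_forall_gt_iff_ge.1 fun z hz => ?_
  obtain ⟨x, c, hx0, hc, hcu, hzc⟩ :=
    exists_isWeightMinorant_of_lt hu.1 (fun s => (hu.2.1 s).ge) hz
  have hle : ∀ k, ((π (x k) - c k : ℝ) : EReal) ≤ π (x k) + u (x k) := fun k => by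
    rw [sub_eq_add_neg, EReal.coe_add]
    exact add_le_add_right (hcu k) _
  obtain ⟨C, hC, -⟩ := EReal.lt_iff_exists_real_btwn.1 hu.2.2
  have hbdd : BddAbove (Set.range fun k => π (x k) - c k) := ⟨C, by
    rintro _ ⟨k, rfl⟩
    exact EReal.coe_le_coe_iff.1 ((hle k).trans ((le_iSup _ (x k)).trans hC.le))⟩
  obtain ⟨w, hw, hlim, hlow⟩ := hc.exists_mem_martinMin hπ hbdd
  set R := ⨆ n, (π (x n) - c n)
  have hmu : (R : EReal) ≤ mu A π u w := le_mu_of_tendsto hlim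
    (EReal.tendsto_coe.2 (tendsto_atTop_ciSup (hc.monotone_sub hπ) hbdd)) hle
  have hwi : ((z - R : ℝ) : EReal) ≤ w i :=
    calc ((z - R : ℝ) : EReal) ≤ ((-π i : ℝ) : EReal) + ((π i - c 0 - R : ℝ) : EReal) := by
          rw [← EReal.coe_add, EReal.coe_le_coe_iff]
          linarith
      _ ≤ K A π i i + ((π i - c 0 - R : ℝ) : EReal) := add_le_add_left (neg_le_K i) _
      _ ≤ w i := hx0 ▸ hlow i 0
  calc (z : EReal) = R + ((z - R : ℝ) : EReal) := by rw [← EReal.coe_add, add_sub_cancel]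
    _ ≤ mu A π u w + w i := add_le_add hmu hwi
    _ ≤ ⨆ w ∈ martinMin A π, (mu A π u w + w i) := le_iSup₂_of_le w hw le_rfl

end

theorem martin_representation_harmonic_general {S : Type*} (A : S → S → EReal)
    (π : S → ℝ) (hπ : LeftSuperharmonic A π)
    (u : S → EReal) (hu : u ∈ Hset A π) :
    (∀ i, u i = ⨆ w ∈ martinMin A π, (mu A π u w + w i)) ∧
    (∀ ν : (S → EReal) → EReal, (∀ w, ν w ≠ ⊤) →
        (∀ i, u i = ⨆ w ∈ martinMin A π, (ν w + w i)) →
        ((⨆ w ∈ martinMin A π, ν w) < ⊤ ∧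
          ∀ w ∈ martinMin A π, ν w ≤ mu A π u w)) ∧
    (∀ ν : (S → EReal) → EReal, (∀ w, ν w ≠ ⊤) →
        (⨆ w ∈ martinMin A π, ν w) < ⊤ →
        (fun i => ⨆ w ∈ martinMin A π, (ν w + w i)) ∈ Hset A π) := by
  refine ⟨fun i => le_antisymm (le_iSup_mu_add hπ hu i) (iSup₂_le fun w hw =>
    mu_add_le_of_superharmonic hw.1 (superharmonic_of_mem_Hset hu) i), fun ν _ hrep => ?_,
    fun ν _ hν => iSup_add_mem_Hset hπ hν⟩
  have hle : ∀ w ∈ martinMin A π, ν w ≤ mu A π u w := fun w hw =>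
    le_mu_of_forall_add_le hw fun j => (hrep j).symm ▸ le_iSup₂_of_le w hw le_rfl
  exact ⟨(iSup₂_le fun w hw => (hle w hw).trans (mu_le_iSup u w)).trans_lt hu.2.2, hle⟩

/-- Poisson–Martin representation of harmonic vectors. For `u ∈ ℋ`:
(i) `u_i = sup_{w ∈ ℳᵐ} (μ_u(w) + w_i)`;
(ii) any representing `ν : ℳᵐ → ℝ ∪ {−∞}` is bounded above and dominated by `μ_u`;
(iii) conversely any bounded above `ν` defines an element of `ℋ`. -/
theorem martin_representation_harmonic {S : Type*} (A : S → S → EReal)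
    (hA : ∀ i j, A i j ≠ ⊤) (π : S → ℝ) (hπ : LeftSuperharmonic A π)
    (u : S → EReal) (hu : u ∈ Hset A π) :
    (∀ i, u i = ⨆ w ∈ martinMin A π, (mu A π u w + w i)) ∧
    (∀ ν : (S → EReal) → EReal, (∀ w, ν w ≠ ⊤) →
        (∀ i, u i = ⨆ w ∈ martinMin A π, (ν w + w i)) →
        ((⨆ w ∈ martinMin A π, ν w) < ⊤ ∧
          ∀ w ∈ martinMin A π, ν w ≤ mu A π u w)) ∧
    (∀ ν : (S → EReal) → EReal, (∀ w, ν w ≠ ⊤) →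
        (⨆ w ∈ martinMin A π, ν w) < ⊤ →
        (fun i => ⨆ w ∈ martinMin A π, (ν w + w i)) ∈ Hset A π) :=
  martin_representation_harmonic_general A π hπ u hu

end MaxPlus
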